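/- Under the hypotheses of the persistence theorem (uniformly dissipative family ẋ = f(x,ε) with globally asymptotically and locally exponentially stable equilibrium x* of the unperturbed system, and the conclusion that for small ε there is a globally asymptotically stable equilibrium x*(ε) with x*(ε) → x*), for every η > 0 there exists ε** > 0 such that for all |ε| ≤ ε** and all x₀ ∈ Ω: dist(x_ε(x₀, t), x₀(x₀, t)) < η for all t ≥ 0, where x_ε and x₀ denote the solutions of the perturbed and unperturbed systems with the same initial condition x₀. -/

import Mathlib

/-!
Split time at a `T` after which, uniformly in `x₀` and small `ε`, both solutions lie within `η / 4`
of their equilibria, which are themselves `η / 4`-close for small `ε`; on `[0, T]` closeness is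
continuous dependence on `ε` over a compact time interval.
-/

open Filter Topology

section

variable {ι X : Type*} [PseudoMetricSpace X] {Ω : Set ι} {φ : ℝ → ℝ → ι → X}

theorem exists_eventually_forall_ge_dist_lt {xstar : X} {xs : ℝ → X}
    (hattr0 : ∀ δ > (0:ℝ), ∃ T : ℝ, ∀ x₀ ∈ Ω, ∀ t ≥ T, dist (φ 0 t x₀) xstar ≤ δ)
    {εstar : ℝ} (hεstar : 0 < εstar)
    (hattrε : ∀ δ > (0:ℝ), ∃ T : ℝ, ∀ ε : ℝ, |ε| ≤ εstar →
      ∀ x₀ ∈ Ω, ∀ t ≥ T, dist (φ ε t x₀) (xs ε) ≤ δ)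
    (hxs : Tendsto xs (𝓝 0) (𝓝 xstar)) {η : ℝ} (hη : 0 < η) :
    ∃ T : ℝ, ∀ᶠ ε in 𝓝 0, ∀ x₀ ∈ Ω, ∀ t ≥ T, dist (φ ε t x₀) (φ 0 t x₀) < η := by
  obtain ⟨T₀, hT₀⟩ := hattr0 (η / 4) (by positivity)
  obtain ⟨T₁, hT₁⟩ := hattrε (η / 4) (by positivity)
  have hsmall : ∀ᶠ ε in 𝓝 (0:ℝ), |ε| ≤ εstar :=
    (continuous_abs.tendsto' 0 0 abs_zero).eventually (eventually_le_nhds hεstar)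
  have hxs_near : ∀ᶠ ε in 𝓝 0, dist (xs ε) xstar < η / 4 :=
    Metric.tendsto_nhds.mp hxs _ (by positivity)
  refine ⟨max T₀ T₁, ?_⟩
  filter_upwards [hsmall, hxs_near] with ε hε hxε x₀ hx₀ t ht
  have hφε := hT₁ ε hε x₀ hx₀ t (le_of_max_le_right ht)
  have hφ0 := hT₀ x₀ hx₀ t (le_of_max_le_left ht)
  calc dist (φ ε t x₀) (φ 0 t x₀)
      ≤ dist (φ ε t x₀) (xs ε) + dist (xs ε) xstar + dist xstar (φ 0 t x₀) :=
        dist_triangle4 _ _ _ _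
    _ < η := by rw [dist_comm xstar]; linarith

theorem eventually_forall_Icc_dist_lt
    (hdep : ∀ T ≥ (0:ℝ), ∀ δ > (0:ℝ), ∃ ρ > (0:ℝ), ∀ ε : ℝ, |ε| < ρ →
      ∀ x₀ ∈ Ω, ∀ t ∈ Set.Icc 0 T, dist (φ ε t x₀) (φ 0 t x₀) < δ)
    {T : ℝ} (hT : 0 ≤ T) {δ : ℝ} (hδ : 0 < δ) :
    ∀ᶠ ε in 𝓝 0, ∀ x₀ ∈ Ω, ∀ t ∈ Set.Icc 0 T, dist (φ ε t x₀) (φ 0 t x₀) < δ := by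
  obtain ⟨ρ, hρ, hclose⟩ := hdep T hT δ hδ
  exact Metric.eventually_nhds_iff.mpr
    ⟨ρ, hρ, fun ε hε => hclose ε (by rwa [Real.dist_0_eq_abs] at hε)⟩

end

/-- `φ ε t x₀` is the solution at time `t` of the `ε`-system started at `x₀`, and `xs ε` is its
equilibrium. -/
theorem uniform_in_time_closeness_general {n : ℕ}
    (Ω : Set (Fin n → ℝ))
    (φ : ℝ → ℝ → (Fin n → ℝ) → (Fin n → ℝ))
    (xstar : Fin n → ℝ) (xs : ℝ → (Fin n → ℝ))
    -- (i) x* globally asymptotically stable for ε = 0, attraction uniform on Ω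
    (hattr0 : ∀ δ > (0:ℝ), ∃ T : ℝ, ∀ x₀ ∈ Ω, ∀ t ≥ T, dist (φ 0 t x₀) xstar ≤ δ)
    -- (ii) for small ε, x*(ε) globally asymptotically stable, uniformly in x₀ and ε
    (εstar : ℝ) (hεstar : 0 < εstar)
    (hattrε : ∀ δ > (0:ℝ), ∃ T : ℝ, ∀ ε : ℝ, |ε| ≤ εstar →
      ∀ x₀ ∈ Ω, ∀ t ≥ T, dist (φ ε t x₀) (xs ε) ≤ δ)
    -- (iii) x*(ε) → x* as ε → 0
    (hxs : Tendsto xs (nhds 0) (nhds xstar))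
    -- (iv) continuous dependence on ε, uniformly on compact time intervals
    (hdep : ∀ T ≥ (0:ℝ), ∀ δ > (0:ℝ), ∃ ρ > (0:ℝ), ∀ ε : ℝ, |ε| < ρ →
      ∀ x₀ ∈ Ω, ∀ t ∈ Set.Icc 0 T, dist (φ ε t x₀) (φ 0 t x₀) < δ) :
    ∀ η > (0:ℝ), ∃ εss > (0:ℝ), ∀ ε : ℝ, |ε| ≤ εss →
      ∀ x₀ ∈ Ω, ∀ t ≥ (0:ℝ), dist (φ ε t x₀) (φ 0 t x₀) < η := by
  intro η hη
  obtain ⟨T, hlate⟩ := exists_eventually_forall_ge_dist_lt hattr0 hεstar hattrε hxs hη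
  have hearly := eventually_forall_Icc_dist_lt hdep (le_max_left 0 T) hη
  obtain ⟨ρ, hρ, hclose⟩ := Metric.eventually_nhds_iff.mp (hlate.and hearly)
  refine ⟨ρ / 2, half_pos hρ, fun ε hε x₀ hx₀ t ht => ?_⟩
  obtain ⟨hlateε, hearlyε⟩ := hclose (y := ε) (by rw [Real.dist_0_eq_abs]; linarith)
  rcases le_or_gt t (max 0 T) with htT | htT
  · exact hearlyε x₀ hx₀ t ⟨ht, htT⟩
  · exact hlateε x₀ hx₀ t (le_of_max_le_right htT.le)

/-- **Uniform-in-time closeness of perturbed and unperturbed solutions.**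
`φ ε t x₀` denotes the solution at time `t` of the `ε`-perturbed system with
initial condition `x₀`; `xs ε` is the perturbed equilibrium. -/
theorem uniform_in_time_closeness {n : ℕ}
    (Ω : Set (Fin n → ℝ))
    (φ : ℝ → ℝ → (Fin n → ℝ) → (Fin n → ℝ))
    (xstar : Fin n → ℝ) (xs : ℝ → (Fin n → ℝ)) (hxs0 : xs 0 = xstar)
    -- (i) x* globally asymptotically stable for ε = 0, attraction uniform on Ω
    (hattr0 : ∀ δ > (0:ℝ), ∃ T : ℝ, ∀ x₀ ∈ Ω, ∀ t ≥ T, dist (φ 0 t x₀) xstar ≤ δ)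
    -- (ii) for small ε, x*(ε) globally asymptotically stable, uniformly in x₀ and ε
    (εstar : ℝ) (hεstar : 0 < εstar)
    (hattrε : ∀ δ > (0:ℝ), ∃ T : ℝ, ∀ ε : ℝ, |ε| ≤ εstar →
      ∀ x₀ ∈ Ω, ∀ t ≥ T, dist (φ ε t x₀) (xs ε) ≤ δ)
    -- (iii) x*(ε) → x* as ε → 0
    (hxs : Tendsto xs (nhds 0) (nhds xstar))
    -- (iv) continuous dependence on ε, uniformly on compact time intervals
    (hdep : ∀ T ≥ (0:ℝ), ∀ δ > (0:ℝ), ∃ ρ > (0:ℝ), ∀ ε : ℝ, |ε| < ρ →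
      ∀ x₀ ∈ Ω, ∀ t ∈ Set.Icc 0 T, dist (φ ε t x₀) (φ 0 t x₀) < δ) :
    ∀ η > (0:ℝ), ∃ εss > (0:ℝ), ∀ ε : ℝ, |ε| ≤ εss →
      ∀ x₀ ∈ Ω, ∀ t ≥ (0:ℝ), dist (φ ε t x₀) (φ 0 t x₀) < η :=
  uniform_in_time_closeness_general Ω φ xstar xs hattr0 εstar hεstar hattrε hxs hdep
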